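/- arXiv:1809.03067 — 2 statements merged into one kernel-verified Lean document; each statement's English description precedes it below -/
import Mathlib

section
/- If a prime p with p ≡ 3 (mod 4) divides the central value e of a magic square of squares, then p divides every one of a, b, c, d, f, g, h, i (so the square is reducible). -/
/-- A magic square of squares: integers `a,…,i` whose squares, arranged in a
3×3 grid with rows `(a²,b²,c²)`, `(d²,e²,f²)`, `(g²,h²,i²)`, are pairwise
distinct and all rows, columns and both main diagonals sum to `T`. -/
def IsMagicSquareOfSquares (a b c d e f g h i T : ℤ) : Prop :=
  ([a^2, b^2, c^2, d^2, e^2, f^2, g^2, h^2, i^2] : List ℤ).Pairwise (· ≠ ·) ∧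
  a^2 + b^2 + c^2 = T ∧ d^2 + e^2 + f^2 = T ∧ g^2 + h^2 + i^2 = T ∧
  a^2 + d^2 + g^2 = T ∧ b^2 + e^2 + h^2 = T ∧ c^2 + f^2 + i^2 = T ∧
  a^2 + e^2 + i^2 = T ∧ c^2 + e^2 + g^2 = T

/-- A magic square of squares is primitive if the gcd of its nine entries is 1. -/
def IsPrimitive (a b c d e f g h i : ℤ) : Prop :=
  Int.gcd (a^2) (Int.gcd (b^2) (Int.gcd (c^2) (Int.gcd (d^2) (Int.gcd (e^2)
    (Int.gcd (f^2) (Int.gcd (g^2) (Int.gcd (h^2) (i^2)))))))) = 1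

lemma dvd_of_dvd_sq_add_sq (p : ℕ) (hp : p.Prime) (hp3 : p % 4 = 3) (x y : ℤ)
    (h : (p : ℤ) ∣ x ^ 2 + y ^ 2) : (p : ℤ) ∣ x ∧ (p : ℤ) ∣ y := by
  haveI : Fact p.Prime := ⟨hp⟩
  have h' : ((x : ZMod p)) ^ 2 = -((y : ZMod p)) ^ 2 := by
    have := (ZMod.intCast_zmod_eq_zero_iff_dvd (x ^ 2 + y ^ 2) p).2 h
    push_cast at this
    linear_combination this
  have hy : (y : ZMod p) = 0 := by
    by_contra hy
    exact ZMod.mod_four_ne_three_of_sq_eq_neg_sq' hy h' hp3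
  have hx : (x : ZMod p) = 0 := by
    have : ((x : ZMod p)) ^ 2 = 0 := by rw [h', hy]; ring
    exact pow_eq_zero_iff (n := 2) (by norm_num) |>.1 this
  exact ⟨(ZMod.intCast_zmod_eq_zero_iff_dvd x p).1 hx,
    (ZMod.intCast_zmod_eq_zero_iff_dvd y p).1 hy⟩

theorem prime_three_mod_four_div_center_divides_all (a b c d e f g h i T : ℤ)
    (hms : IsMagicSquareOfSquares a b c d e f g h i T)
    (p : ℕ) (hp : p.Prime) (hp3 : p % 4 = 3) (hdvd : (p : ℤ) ∣ e) :
    (p : ℤ) ∣ a ∧ (p : ℤ) ∣ b ∧ (p : ℤ) ∣ c ∧ (p : ℤ) ∣ d ∧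
    (p : ℤ) ∣ f ∧ (p : ℤ) ∣ g ∧ (p : ℤ) ∣ h ∧ (p : ℤ) ∣ i := by
  obtain ⟨-, h1, h2, h3, h4, h5, h6, h7, h8⟩ := hms
  have hT : T = 3 * e ^ 2 := by linarith
  have he2 : (p : ℤ) ∣ 2 * e ^ 2 := (dvd_pow hdvd two_ne_zero).mul_left 2
  have key : ∀ x y : ℤ, x ^ 2 + y ^ 2 = 2 * e ^ 2 → (p : ℤ) ∣ x ∧ (p : ℤ) ∣ y := by
    intro x y hxy
    exact dvd_of_dvd_sq_add_sq p hp hp3 x y (hxy ▸ he2)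
  obtain ⟨ha, hi⟩ := key a i (by linarith)
  obtain ⟨hb, hh⟩ := key b h (by linarith)
  obtain ⟨hc, hg⟩ := key c g (by linarith)
  obtain ⟨hd, hf⟩ := key d f (by linarith)
  exact ⟨ha, hb, hc, hd, hf, hg, hh, hi⟩
end

section
/- Let p be a prime with p ≡ 1 (mod 4), let C_p = {n ∈ ZMod p : n, n+1, n+2 are all nonzero squares in ZMod p}, and set k = 2 if p ≡ 1 (mod 8) and k = 1 if p ≡ 5 (mod 8). Then the set of 3×3 matrices M over ZMod p for which there exists a primitive magic square of squares with values a, b, c, d, e, f, g, h, i such that p divides e and M equals the entrywise reduction modulo p of the grid (a², b², c²; d², e², f²; g², h², i²), has cardinality at most (p−1)·(|C_p| + 2k). -/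
/-! Reduce modulo `p`. Since `e ≡ 0`, the magic relations (`T = 3e²`, `d² = e² + c² - a²`,
…) force the reduced grid to be `(x, -(x+z), z; z-x, 0, x-z; -z, x+z, -x)` with `x = a²`
and `z = c²`. So it is determined by `(x, z)`, where `x`, `z`, `x + z = h²` and `x - z = f²`
are squares and `(x, z) ≠ 0` by primitivity. Count such pairs: `x = 0` and `z = 0` give
`p - 1` each; `z = ±x` makes `2x` a square next to the nonzero square `x`, so `2` is a square,
i.e. `p ≡ 1 (mod 8)`, and gives `2(p - 1)`; otherwise `(x, z) = z • (n + 1, 1)` with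
`n = x/z - 1` in `C_p = consecutiveSquares (ZMod p)`. -/

open Set

def castSquareGrid (R : Type*) [CommRing R] (a b c d e f g h i : ℤ) : Matrix (Fin 3) (Fin 3) R :=
  !![((a^2 : ℤ) : R), ((b^2 : ℤ) : R), ((c^2 : ℤ) : R);
     ((d^2 : ℤ) : R), ((e^2 : ℤ) : R), ((f^2 : ℤ) : R);
     ((g^2 : ℤ) : R), ((h^2 : ℤ) : R), ((i^2 : ℤ) : R)]

def zeroCenterGrid {R : Type*} [CommRing R] (x z : R) : Matrix (Fin 3) (Fin 3) R :=
  !![x, -(x + z), z; z - x, 0, x - z; -z, x + z, -x]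

def zeroCenterCorners (F : Type*) [Field F] : Set (F × F) :=
  {q | IsSquare q.1 ∧ IsSquare q.2 ∧ IsSquare (q.1 + q.2) ∧ IsSquare (q.1 - q.2) ∧ q ≠ 0}

def consecutiveSquares (F : Type*) [Field F] : Set F :=
  {n | (n ≠ 0 ∧ IsSquare n) ∧
    (n + 1 ≠ 0 ∧ IsSquare (n + 1)) ∧ (n + 2 ≠ 0 ∧ IsSquare (n + 2))}

theorem ncard_compl_singleton {α : Type*} [Finite α] (a : α) :
    ({a}ᶜ : Set α).ncard = Nat.card α - 1 := by
  rw [ncard_compl, ncard_singleton]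

section Counting

variable {F : Type*} [Field F]

theorem IsSquare.of_mul_right {a b : F} (h : IsSquare (a * b)) (hb : IsSquare b) (hb0 : b ≠ 0) :
    IsSquare a := by
  simpa [mul_assoc, mul_inv_cancel₀ hb0] using h.mul hb.inv

theorem div_sub_one_mem_consecutiveSquares {x z : F} (hx : x ≠ 0) (hz : z ≠ 0) (hxz : x ≠ z)
    (hxz' : x + z ≠ 0) (hxs : IsSquare x) (hzs : IsSquare z) (hadd : IsSquare (x + z))
    (hsub : IsSquare (x - z)) : x / z - 1 ∈ consecutiveSquares F := by
  have h0 : x / z - 1 = (x - z) / z := by field_simp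
  have h1 : x / z - 1 + 1 = x / z := by ring
  have h2 : x / z - 1 + 2 = (x + z) / z := by field_simp; ring
  refine ⟨⟨?_, ?_⟩, ⟨?_, ?_⟩, ⟨?_, ?_⟩⟩
  · rw [h0]; exact div_ne_zero (sub_ne_zero.2 hxz) hz
  · rw [h0]; exact hsub.div hzs
  · rw [h1]; exact div_ne_zero hx hz
  · rw [h1]; exact hxs.div hzs
  · rw [h2]; exact div_ne_zero hxz' hz
  · rw [h2]; exact hadd.div hzs

theorem zeroCenterCorners_subset :
    zeroCenterCorners F ⊆
      (fun z => (0, z)) '' {0}ᶜ ∪ (fun x => (x, 0)) '' {0}ᶜ ∪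
        {q | q.1 ≠ 0 ∧ (q.2 = q.1 ∨ q.2 = -q.1) ∧ IsSquare (2 : F)} ∪
        (fun q => (q.1 * (q.2 + 1), q.1)) '' ({0}ᶜ ×ˢ consecutiveSquares F) := by
  rintro ⟨x, z⟩ ⟨hxs, hzs, hadd, hsub, hq⟩
  by_cases hx : x = 0
  · subst hx
    exact .inl <| .inl <| .inl ⟨z, fun hz => hq (by rw [mem_singleton_iff.1 hz]; rfl), rfl⟩
  by_cases hz : z = 0
  · subst hz
    exact .inl <| .inl <| .inr ⟨x, hx, rfl⟩
  by_cases hxz : x = z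
  · subst hxz
    have h2x : IsSquare (2 * x) := by rwa [two_mul]
    exact .inl <| .inr ⟨hx, .inl rfl, h2x.of_mul_right hxs hx⟩
  by_cases hxz' : x + z = 0
  · obtain rfl : z = -x := by linear_combination hxz'
    have h2x : IsSquare (2 * x) := by rwa [sub_neg_eq_add, ← two_mul] at hsub
    exact .inl <| .inr ⟨hx, .inr rfl, h2x.of_mul_right hxs hx⟩
  refine .inr ⟨(z, x / z - 1), ⟨hz, ?_⟩, ?_⟩
  · exact div_sub_one_mem_consecutiveSquares hx hz hxz hxz' hxs hzs hadd hsub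
  simp only [sub_add_cancel, mul_div_cancel₀ x hz]

variable [Finite F]

theorem ncard_diagonals_le [Decidable (IsSquare (2 : F))] :
    {q : F × F | q.1 ≠ 0 ∧ (q.2 = q.1 ∨ q.2 = -q.1) ∧ IsSquare (2 : F)}.ncard ≤
      (if IsSquare (2 : F) then 2 else 0) * (Nat.card F - 1) := by
  split_ifs with h2
  · set N : Set F := {0}ᶜ
    calc _ ≤ ((fun x => (x, x)) '' N ∪ (fun x => (x, -x)) '' N).ncard := by
          refine ncard_le_ncard ?_ (toFinite _)
          rintro ⟨x, z⟩ ⟨hx, h | h, -⟩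
          · exact .inl ⟨x, hx, by rw [show z = x from h]⟩
          · exact .inr ⟨x, hx, by rw [show z = -x from h]⟩
      _ ≤ ((fun x => (x, x)) '' N).ncard + ((fun x => (x, -x)) '' N).ncard := ncard_union_le _ _
      _ ≤ 2 * (Nat.card F - 1) := by
          rw [two_mul, ← ncard_compl_singleton (0 : F)]
          gcongr <;> exact ncard_image_le (toFinite _)
  · simp [h2]

theorem ncard_zeroCenterCorners_le [Decidable (IsSquare (2 : F))] :
    (zeroCenterCorners F).ncard ≤
      (Nat.card F - 1) *
        ((consecutiveSquares F).ncard + 2 * if IsSquare (2 : F) then 2 else 1) := by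
  set N : Set F := {0}ᶜ
  set D : Set (F × F) := {q | q.1 ≠ 0 ∧ (q.2 = q.1 ∨ q.2 = -q.1) ∧ IsSquare (2 : F)}
  set A := (fun z => ((0 : F), z)) '' N
  set B := (fun x => (x, (0 : F))) '' N
  set G := (fun q : F × F => (q.1 * (q.2 + 1), q.1)) '' (N ×ˢ consecutiveSquares F)
  calc (zeroCenterCorners F).ncard ≤ (A ∪ B ∪ D ∪ G).ncard :=
        ncard_le_ncard zeroCenterCorners_subset (toFinite _)
    _ ≤ A.ncard + B.ncard + D.ncard + G.ncard := by
      refine (ncard_union_le _ _).trans (add_le_add_left ?_ _)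
      refine (ncard_union_le _ _).trans (add_le_add_left ?_ _)
      exact ncard_union_le _ _
    _ ≤ N.ncard + N.ncard + (if IsSquare (2 : F) then 2 else 0) * (Nat.card F - 1) +
          (N ×ˢ consecutiveSquares F).ncard :=
      add_le_add (add_le_add (add_le_add (ncard_image_le (toFinite _))
        (ncard_image_le (toFinite _))) ncard_diagonals_le) (ncard_image_le (toFinite _))
    _ = _ := by
      rw [ncard_prod, ncard_compl_singleton (0 : F)]
      split_ifs <;> ring

end Counting

section Reduction

variable {a b c d e f g h i T : ℤ}

theorem IsPrimitive.eq_one_of_dvd {n : ℕ} (hprim : IsPrimitive a b c d e f g h i)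
    (ha : (n : ℤ) ∣ a ^ 2) (hb : (n : ℤ) ∣ b ^ 2) (hc : (n : ℤ) ∣ c ^ 2) (hd : (n : ℤ) ∣ d ^ 2)
    (he : (n : ℤ) ∣ e ^ 2) (hf : (n : ℤ) ∣ f ^ 2) (hg : (n : ℤ) ∣ g ^ 2) (hh : (n : ℤ) ∣ h ^ 2)
    (hi : (n : ℤ) ∣ i ^ 2) : n = 1 := by
  have hdvd := Int.dvd_coe_gcd ha <| Int.dvd_coe_gcd hb <| Int.dvd_coe_gcd hc <|
    Int.dvd_coe_gcd hd <| Int.dvd_coe_gcd he <| Int.dvd_coe_gcd hf <| Int.dvd_coe_gcd hg <|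
    Int.dvd_coe_gcd hh hi
  rw [hprim, Nat.cast_one, Int.natCast_dvd_ofNat] at hdvd
  exact Nat.dvd_one.1 hdvd

theorem IsPrimitive.castSquareGrid_ne_zero {n : ℕ} (hprim : IsPrimitive a b c d e f g h i)
    (hn : n ≠ 1) :
    castSquareGrid (ZMod n) a b c d e f g h i ≠ 0 := by
  intro hzero
  have entry := fun r s => (congrFun (congrFun hzero r) s)
  have dvd {x : ℤ} (hx : ((x ^ 2 : ℤ) : ZMod n) = 0) : (n : ℤ) ∣ x ^ 2 :=
    (ZMod.intCast_zmod_eq_zero_iff_dvd _ n).1 hx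
  exact hn <| hprim.eq_one_of_dvd (dvd (entry 0 0)) (dvd (entry 0 1)) (dvd (entry 0 2))
    (dvd (entry 1 0)) (dvd (entry 1 1)) (dvd (entry 1 2)) (dvd (entry 2 0)) (dvd (entry 2 1))
    (dvd (entry 2 2))

theorem IsMagicSquareOfSquares.castSquareGrid_eq_zeroCenterGrid {R : Type*} [CommRing R]
    (hM : IsMagicSquareOfSquares a b c d e f g h i T) (he : (e : R) = 0) :
    castSquareGrid R a b c d e f g h i = zeroCenterGrid ((a^2 : ℤ) : R) ((c^2 : ℤ) : R) := by
  obtain ⟨-, h1, h2, h3, h4, h5, h6, h7, h8⟩ := hM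
  have hb : b ^ 2 = 3 * e ^ 2 - a ^ 2 - c ^ 2 := by linarith
  have hd : d ^ 2 = e ^ 2 + c ^ 2 - a ^ 2 := by linarith
  have hf : f ^ 2 = e ^ 2 + a ^ 2 - c ^ 2 := by linarith
  have hg : g ^ 2 = 2 * e ^ 2 - c ^ 2 := by linarith
  have hh : h ^ 2 = a ^ 2 + c ^ 2 - e ^ 2 := by linarith
  have hi : i ^ 2 = 2 * e ^ 2 - a ^ 2 := by linarith
  rw [castSquareGrid, hb, hd, hf, hg, hh, hi]
  ext r s
  fin_cases r <;> fin_cases s <;> simp [zeroCenterGrid, he]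
  ring

theorem IsMagicSquareOfSquares.mem_zeroCenterCorners {p : ℕ} [Fact p.Prime]
    (hM : IsMagicSquareOfSquares a b c d e f g h i T) (hprim : IsPrimitive a b c d e f g h i)
    (he : (e : ZMod p) = 0) :
    (((a^2 : ℤ) : ZMod p), ((c^2 : ℤ) : ZMod p)) ∈ zeroCenterCorners (ZMod p) := by
  have hgrid := hM.castSquareGrid_eq_zeroCenterGrid he
  have hsq (x : ℤ) : IsSquare ((x ^ 2 : ℤ) : ZMod p) := ⟨x, by push_cast; ring⟩
  refine ⟨hsq a, hsq c, ?_, ?_, fun hq => ?_⟩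
  · convert hsq h using 1
    exact (congrFun (congrFun hgrid 2) 1).symm
  · convert hsq f using 1
    exact (congrFun (congrFun hgrid 1) 2).symm
  obtain ⟨hx, hz⟩ := Prod.mk_eq_zero.1 hq
  refine hprim.castSquareGrid_ne_zero (Fact.out : p.Prime).ne_one ?_
  rw [hgrid, hx, hz]
  ext r s
  fin_cases r <;> fin_cases s <;> simp [zeroCenterGrid]

end Reduction

theorem residue_class_count_bound (p : ℕ) (hp : p.Prime) (hp1 : p % 4 = 1) :
    let C : Set (ZMod p) := {n | (n ≠ 0 ∧ IsSquare n) ∧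
      (n + 1 ≠ 0 ∧ IsSquare (n + 1)) ∧ (n + 2 ≠ 0 ∧ IsSquare (n + 2))}
    let k : ℕ := if p % 8 = 1 then 2 else 1
    let S : Set (Matrix (Fin 3) (Fin 3) (ZMod p)) :=
      {M | ∃ a b c d e f g h i T : ℤ,
        IsMagicSquareOfSquares a b c d e f g h i T ∧
        IsPrimitive a b c d e f g h i ∧ (p : ℤ) ∣ e ∧
        M = !![((a^2 : ℤ) : ZMod p), ((b^2 : ℤ) : ZMod p), ((c^2 : ℤ) : ZMod p);
               ((d^2 : ℤ) : ZMod p), ((e^2 : ℤ) : ZMod p), ((f^2 : ℤ) : ZMod p);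
               ((g^2 : ℤ) : ZMod p), ((h^2 : ℤ) : ZMod p), ((i^2 : ℤ) : ZMod p)]}
    S.ncard ≤ (p - 1) * (C.ncard + 2 * k) := by
  intro C k S
  have : Fact p.Prime := ⟨hp⟩
  have hk : k = if IsSquare (2 : ZMod p) then 2 else 1 := by
    have h2 : IsSquare (2 : ZMod p) ↔ p % 8 = 1 := by
      rw [ZMod.exists_sq_eq_two_iff (by omega)]
      omega
    simp only [k, h2]
  have hS : S ⊆ (fun q => zeroCenterGrid q.1 q.2) '' zeroCenterCorners (ZMod p) := by
    rintro _ ⟨a, b, c, d, e, f, g, h, i, T, hM, hprim, he, rfl⟩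
    replace he : (e : ZMod p) = 0 := (ZMod.intCast_zmod_eq_zero_iff_dvd e p).2 he
    exact ⟨_, hM.mem_zeroCenterCorners hprim he, (hM.castSquareGrid_eq_zeroCenterGrid he).symm⟩
  calc S.ncard ≤ (zeroCenterCorners (ZMod p)).ncard :=
        (ncard_le_ncard hS (toFinite _)).trans (ncard_image_le (toFinite _))
    _ ≤ _ := ncard_zeroCenterCorners_le
    _ = (p - 1) * (C.ncard + 2 * k) := by rw [Nat.card_zmod, hk]; rfl
end
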